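/- arXiv:1707.04306 — 4 statements merged into one kernel-verified Lean document; each statement's English description precedes it below -/
import Mathlib

section
/- Let S be a real symmetric p×p matrix and define g(θ) = −log det θ + Tr(θS) on positive definite θ, with gradient ∇g(θ) = S − θ⁻¹. For constants 0 < b < B < ∞ and all θ, ϑ ∈ M_p^+(b,B), the two-sided bound holds: g(θ) + ⟨∇g(θ), ϑ−θ⟩ + (1/(2B²))‖ϑ−θ‖_F² ≤ g(ϑ) ≤ g(θ) + ⟨∇g(θ), ϑ−θ⟩ + (1/(2b²))‖ϑ−θ‖_F². -/
/-!
Write `Δ = ϑ - θ`. Since the trace term of `g` is linear, the gap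
`g ϑ - g θ - ⟨∇g θ, Δ⟩` is the Bregman divergence `log det θ - log det ϑ + tr (θ⁻¹ Δ)` of
`-log det`. A congruence `θ = W Wᵀ`, `Δ = W diag(x) Wᵀ` diagonalizes the whole segment
`θ + tΔ = W diag(1 + t x) Wᵀ`, so the divergence equals `φ 1` for
`φ t = ∑ (t xᵢ - log (1 + t xᵢ))`, where `φ 0 = φ' 0 = 0` and
`φ'' t = ∑ (xᵢ / (1 + t xᵢ))² = tr (((θ + tΔ)⁻¹ Δ)²)`. Along the segment `b ≤ θ + tΔ ≤ B` in the
Loewner order, which pins `φ''` between `tr (Δ²) / B²` and `tr (Δ²) / b²`; Taylor's theorem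
finishes the proof.
-/

open Matrix Finset MeasureTheory ProbabilityTheory Filter

noncomputable section

/-- Frobenius norm of a real matrix. -/
def frob {p : ℕ} (M : Matrix (Fin p) (Fin p) ℝ) : ℝ := Real.sqrt (∑ i, ∑ j, (M i j)^2)

/-- Entrywise ℓ¹ norm. -/
def l1m {p : ℕ} (M : Matrix (Fin p) (Fin p) ℝ) : ℝ := ∑ i, ∑ j, |M i j|

/-- Entrywise sup norm. -/
def linf {p : ℕ} (M : Matrix (Fin p) (Fin p) ℝ) : ℝ := ⨆ i, ⨆ j, |M i j|

/-- Elastic-net penalty. -/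
def wp {p : ℕ} (α : ℝ) (M : Matrix (Fin p) (Fin p) ℝ) : ℝ :=
  α * l1m M + (1 - α)/2 * (frob M)^2

/-- Smallest eigenvalue. -/
def lamMin {p : ℕ} (M : Matrix (Fin p) (Fin p) ℝ) : ℝ :=
  sInf {r : ℝ | Module.End.HasEigenvalue (Matrix.toLin' M) r}

/-- Largest eigenvalue. -/
def lamMax {p : ℕ} (M : Matrix (Fin p) (Fin p) ℝ) : ℝ :=
  sSup {r : ℝ | Module.End.HasEigenvalue (Matrix.toLin' M) r}

/-- Euclidean norm of a vector. -/
def vnorm {p : ℕ} (v : Fin p → ℝ) : ℝ := Real.sqrt (∑ i, (v i)^2)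

/-- Spectral (operator) norm. -/
def specNorm {p : ℕ} (M : Matrix (Fin p) (Fin p) ℝ) : ℝ :=
  sSup {r : ℝ | ∃ v : Fin p → ℝ, vnorm v = 1 ∧ r = vnorm (M.mulVec v)}

/-- `M ∈ M_p^+(a, A)`. -/
def Mpp {p : ℕ} (a A : ℝ) (M : Matrix (Fin p) (Fin p) ℝ) : Prop :=
  M.PosDef ∧ a ≤ lamMin M ∧ lamMax M ≤ A

/-- Elastic-net proximal map, entrywise. -/
def proxMat {p : ℕ} (α γ : ℝ) (M : Matrix (Fin p) (Fin p) ℝ) :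
    Matrix (Fin p) (Fin p) ℝ :=
  Matrix.of fun i j =>
    if |M i j| < α * γ then 0
    else if α * γ ≤ M i j then (M i j - α*γ)/(1+(1-α)*γ)
    else (M i j + α*γ)/(1+(1-α)*γ)

/-- Pre/post change sample covariance matrices `S₁(τ)` (j = 0) and `S₂(τ)` (j = 1). -/
def Smat {p : ℕ} (X : ℕ → Fin p → ℝ) (T : ℕ) (j : Fin 2) (τ : ℕ) :
    Matrix (Fin p) (Fin p) ℝ :=
  if j = 0 then ((τ : ℝ))⁻¹ • ∑ t ∈ Finset.Icc 1 τ, vecMulVec (X t) (X t)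
  else ((T : ℝ) - (τ : ℝ))⁻¹ • ∑ t ∈ Finset.Icc (τ+1) T, vecMulVec (X t) (X t)

/-- The functions `g_{1,τ}` (j = 0) and `g_{2,τ}` (j = 1). -/
def gfun {p : ℕ} (X : ℕ → Fin p → ℝ) (T : ℕ) (j : Fin 2) (τ : ℕ)
    (θ : Matrix (Fin p) (Fin p) ℝ) : ℝ :=
  (if j = 0 then (τ : ℝ)/(2*T) else ((T : ℝ)-(τ : ℝ))/(2*T)) *
    (-Real.log θ.det + (θ * Smat X T j τ).trace)

/-- The surrogate function `H(τ | θ₁, θ₂)`. -/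
def Hfun {p : ℕ} (X : ℕ → Fin p → ℝ) (T : ℕ) (lam : Fin 2 → ℕ → ℝ) (α : ℝ) (τ : ℕ)
    (θ1 θ2 : Matrix (Fin p) (Fin p) ℝ) : ℝ :=
  gfun X T 0 τ θ1 + lam 0 τ * wp α θ1 + gfun X T 1 τ θ2 + lam 1 τ * wp α θ2

/-- `μ_j = max_{τ ∈ T} [½‖S_j(τ)‖₂ + αpλ_{j,τ}]`. -/
def muC {p : ℕ} (X : ℕ → Fin p → ℝ) (T n₀ : ℕ) (lam : Fin 2 → ℕ → ℝ) (α : ℝ)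
    (j : Fin 2) : ℝ :=
  sSup ((fun τ : ℕ => (1/2) * specNorm (Smat X T j τ) + α * (p : ℝ) * lam j τ) ''
    ↑(Finset.Icc n₀ (T - n₀)))

/-- `λ̄_j = max_{τ ∈ T} λ_{j,τ}`. -/
def lamBar (lam : Fin 2 → ℕ → ℝ) (n₀ T : ℕ) (j : Fin 2) : ℝ :=
  sSup (lam j '' ↑(Finset.Icc n₀ (T - n₀)))

/-- `λ̲_j = min_{τ ∈ T} λ_{j,τ}`. -/
def lamUnd (lam : Fin 2 → ℕ → ℝ) (n₀ T : ℕ) (j : Fin 2) : ℝ :=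
  sInf (lam j '' ↑(Finset.Icc n₀ (T - n₀)))

/-- The constant `b_j`. -/
def bC {p : ℕ} (X : ℕ → Fin p → ℝ) (T n₀ : ℕ) (lam : Fin 2 → ℕ → ℝ) (α : ℝ)
    (j : Fin 2) : ℝ :=
  (-(muC X T n₀ lam α j) +
      Real.sqrt ((muC X T n₀ lam α j)^2 + 2*(lamBar lam n₀ T j)*(1-α)*((n₀ : ℝ)/(T : ℝ))))
    / (2*(1-α)*(lamBar lam n₀ T j))

/-- The constant `B_j`. -/
def BC {p : ℕ} (X : ℕ → Fin p → ℝ) (T n₀ : ℕ) (lam : Fin 2 → ℕ → ℝ) (α : ℝ)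
    (j : Fin 2) : ℝ :=
  ((muC X T n₀ lam α j) +
      Real.sqrt ((muC X T n₀ lam α j)^2 + 2*(lamUnd lam n₀ T j)*(1-α)))
    / (2*(1-α)*(lamUnd lam n₀ T j))

/-- `N(0, S)` law on `ℝ^p`: pushforward of a standard Gaussian by any `A` with `AAᵀ = S`. -/
def IsGaussianLaw {p : ℕ} (μ : Measure (Fin p → ℝ)) (S : Matrix (Fin p) (Fin p) ℝ) : Prop :=
  ∃ A : Matrix (Fin p) (Fin p) ℝ, A * Aᵀ = S ∧
    μ = Measure.map A.mulVec (Measure.pi fun _ : Fin p => gaussianReal 0 1)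

/-- Restricted largest eigenvalue over unit vectors with at most 2 nonzero coordinates. -/
def kupp {p : ℕ} (S : Matrix (Fin p) (Fin p) ℝ) : ℝ :=
  sSup {r : ℝ | ∃ u : Fin p → ℝ, vnorm u = 1 ∧ (Function.support u).ncard ≤ 2 ∧
    r = u ⬝ᵥ S.mulVec u}

/-- Restricted smallest eigenvalue over unit vectors with at most 2 nonzero coordinates. -/
def klow {p : ℕ} (S : Matrix (Fin p) (Fin p) ℝ) : ℝ :=
  sInf {r : ℝ | ∃ u : Fin p → ℝ, vnorm u = 1 ∧ (Function.support u).ncard ≤ 2 ∧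
    r = u ⬝ᵥ S.mulVec u}

/-- Number of nonzero entries of a matrix. -/
def nnz {p : ℕ} (M : Matrix (Fin p) (Fin p) ℝ) : ℕ :=
  (Function.support (fun ij : Fin p × Fin p => M ij.1 ij.2)).ncard

/-- `g(θ) = -log det θ + Tr(θ S)`. -/
def gdet {p : ℕ} (S θ : Matrix (Fin p) (Fin p) ℝ) : ℝ :=
  -Real.log θ.det + (θ * S).trace

/-- The regularization parameters of equation (3.2). -/
def lamForm (p T : ℕ) (κbar α : ℝ) : Fin 2 → ℕ → ℝ := fun j τ =>
  if j = 0 then κbar/(α*(T : ℝ)) * Real.sqrt (48*(τ : ℝ)*Real.log ((p : ℝ)*(T : ℝ)))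
  else κbar/(α*(T : ℝ)) * Real.sqrt (48*((T : ℝ)-(τ : ℝ))*Real.log ((p : ℝ)*(T : ℝ)))


open scoped MatrixOrder

theorem quadratic_lower_bound_of_le_deriv2 {f f' f'' : ℝ → ℝ} {a b c : ℝ} (hab : a ≤ b)
    (hf : ∀ t ∈ Set.Icc a b, HasDerivAt f (f' t) t)
    (hf' : ∀ t ∈ Set.Icc a b, HasDerivAt f' (f'' t) t) (hc : ∀ t ∈ Set.Icc a b, c ≤ f'' t) :
    f a + f' a * (b - a) + c / 2 * (b - a) ^ 2 ≤ f b := by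
  rcases hab.eq_or_lt with rfl | hlt
  · simp
  have hg : ∀ t ∈ Set.Icc a b, HasDerivAt (fun s => f s - c / 2 * s ^ 2) (f' t - c * t) t :=
    fun t ht => ((hf t ht).sub ((hasDerivAt_pow 2 t).const_mul (c / 2))).congr_deriv (by ring)
  have hg' : ∀ t ∈ Set.Icc a b, HasDerivAt (fun s => f' s - c * s) (f'' t - c) t :=
    fun t ht => ((hf' t ht).sub ((hasDerivAt_id t).const_mul c)).congr_deriv (by simp)
  -- `f - c t² / 2` is convex, so it lies above its tangent line at `a`
  have hconv : ConvexOn ℝ (Set.Icc a b) (fun s => f s - c / 2 * s ^ 2) :=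
    convexOn_of_hasDerivWithinAt2_nonneg (convex_Icc a b)
      (fun t ht => (hg t ht).continuousAt.continuousWithinAt)
      (fun t ht => (hg t (interior_subset ht)).hasDerivWithinAt)
      (fun t ht => (hg' t (interior_subset ht)).hasDerivWithinAt)
      (fun t ht => sub_nonneg.2 (hc t (interior_subset ht)))
  have hslope := hconv.le_slope_of_hasDerivAt (Set.left_mem_Icc.2 hab)
    (Set.right_mem_Icc.2 hab) hlt (hg a (Set.left_mem_Icc.2 hab))
  rw [slope_def_field, le_div_iff₀ (sub_pos.2 hlt)] at hslope
  nlinarith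

theorem quadratic_upper_bound_of_deriv2_le {f f' f'' : ℝ → ℝ} {a b C : ℝ} (hab : a ≤ b)
    (hf : ∀ t ∈ Set.Icc a b, HasDerivAt f (f' t) t)
    (hf' : ∀ t ∈ Set.Icc a b, HasDerivAt f' (f'' t) t) (hC : ∀ t ∈ Set.Icc a b, f'' t ≤ C) :
    f b ≤ f a + f' a * (b - a) + C / 2 * (b - a) ^ 2 := by
  have := quadratic_lower_bound_of_le_deriv2 (f := -f) (f' := -f') (f'' := -f'') (c := -C) hab
    (fun t ht => (hf t ht).neg) (fun t ht => (hf' t ht).neg) (fun t ht => neg_le_neg (hC t ht))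
  simp only [Pi.neg_apply] at this
  linarith

section SumSubLog

variable {ι : Type*} [Fintype ι]

theorem hasDerivAt_sum_mul_sub_log (x : ι → ℝ) {t : ℝ} (ht : ∀ i, 1 + t * x i ≠ 0) :
    HasDerivAt (fun s => ∑ i, (s * x i - Real.log (1 + s * x i)))
      (∑ i, (x i - x i / (1 + t * x i))) t :=
  HasDerivAt.fun_sum fun i _ =>
    (hasDerivAt_mul_const (x i)).sub (((hasDerivAt_mul_const (x i)).const_add 1).log (ht i))

theorem hasDerivAt_sum_sub_div (x : ι → ℝ) {t : ℝ} (ht : ∀ i, 1 + t * x i ≠ 0) :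
    HasDerivAt (fun s => ∑ i, (x i - x i / (1 + s * x i))) (∑ i, (x i / (1 + t * x i)) ^ 2) t :=
  HasDerivAt.fun_sum fun i _ =>
    (((hasDerivAt_const t (x i)).div ((hasDerivAt_mul_const (x i)).const_add 1) (ht i)).const_sub
      (x i)).congr_deriv (by field_simp [ht i]; ring)

theorem one_add_mul_pos {x t : ℝ} (hx : 0 < 1 + x) (ht : t ∈ Set.Icc (0 : ℝ) 1) :
    0 < 1 + t * x := by
  nlinarith [ht.1, ht.2, mul_nonneg ht.1 hx.le]

theorem sum_sub_log_mem_Icc {x : ι → ℝ} (hx : ∀ i, 0 < 1 + x i) {c C : ℝ}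
    (h : ∀ t ∈ Set.Icc (0 : ℝ) 1, ∑ i, (x i / (1 + t * x i)) ^ 2 ∈ Set.Icc c C) :
    ∑ i, (x i - Real.log (1 + x i)) ∈ Set.Icc (c / 2) (C / 2) := by
  have hpos : ∀ t ∈ Set.Icc (0 : ℝ) 1, ∀ i, 1 + t * x i ≠ 0 := fun t ht i =>
    (one_add_mul_pos (hx i) ht).ne'
  have hf := fun t ht => hasDerivAt_sum_mul_sub_log x (hpos t ht)
  have hf' := fun t ht => hasDerivAt_sum_sub_div x (hpos t ht)
  have lower := quadratic_lower_bound_of_le_deriv2 zero_le_one hf hf' fun t ht => (h t ht).1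
  have upper := quadratic_upper_bound_of_deriv2_le zero_le_one hf hf' fun t ht => (h t ht).2
  simp only [zero_mul, add_zero, Real.log_one, sub_zero, div_one, sub_self, Finset.sum_const_zero,
    zero_add, one_mul, one_pow, mul_one] at lower upper
  exact ⟨lower, upper⟩

end SumSubLog

namespace Matrix

variable {n : Type*} [Fintype n] [DecidableEq n]

theorem setOf_hasEigenvalue_toLin'_eq_range {A : Matrix n n ℝ} (hA : A.IsHermitian) :
    {r : ℝ | Module.End.HasEigenvalue (toLin' A) r} = Set.range hA.eigenvalues := by
  ext r
  change Module.End.HasEigenvalue _ r ↔ _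
  rw [Module.End.hasEigenvalue_iff_mem_spectrum, spectrum_toLin',
    hA.spectrum_real_eq_range_eigenvalues]

theorem IsHermitian.algebraMap_le_iff_le_eigenvalues {A : Matrix n n ℝ} (hA : A.IsHermitian)
    {r : ℝ} : algebraMap ℝ _ r ≤ A ↔ ∀ i, r ≤ hA.eigenvalues i := by
  rw [algebraMap_le_iff_le_spectrum hA.isSelfAdjoint, hA.spectrum_real_eq_range_eigenvalues,
    Set.forall_mem_range]

theorem IsHermitian.le_algebraMap_iff_eigenvalues_le {A : Matrix n n ℝ} (hA : A.IsHermitian)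
    {r : ℝ} : A ≤ algebraMap ℝ _ r ↔ ∀ i, hA.eigenvalues i ≤ r := by
  rw [le_algebraMap_iff_spectrum_le hA.isSelfAdjoint, hA.spectrum_real_eq_range_eigenvalues,
    Set.forall_mem_range]

theorem posDef_of_algebraMap_le {A : Matrix n n ℝ} {b : ℝ} (hb : 0 < b)
    (h : algebraMap ℝ _ b ≤ A) : A.PosDef := by
  have := (PosDef.one.smul hb).add_posSemidef (Matrix.le_iff.1 h)
  rwa [Algebra.algebraMap_eq_smul_one, add_sub_cancel] at this

theorem trace_sq_diagonal_mul (d : n → ℝ) (X : Matrix n n ℝ) :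
    trace ((diagonal d * X) ^ 2) = ∑ i, ∑ j, d i * d j * (X i j * X j i) := by
  simp only [sq, trace, diag, mul_apply, diagonal_apply, ite_mul, zero_mul, Finset.sum_ite_eq,
    Finset.mem_univ, if_true]
  exact Finset.sum_congr rfl fun i _ => Finset.sum_congr rfl fun j _ => by ring

theorem trace_sq_eq_sum_sq {X : Matrix n n ℝ} (hX : X.IsHermitian) :
    trace (X ^ 2) = ∑ i, ∑ j, X i j ^ 2 := by
  have hsymm : ∀ i j, X j i = X i j := fun i j => by simpa using hX.apply i j
  simpa [hsymm, sq] using trace_sq_diagonal_mul 1 X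

theorem det_conj_diagonal (W : Matrix n n ℝ) (d : n → ℝ) :
    det (W * diagonal d * star W) = det (W * star W) * ∏ i, d i := by
  rw [det_mul, det_mul, det_mul, det_diagonal]
  ring

theorem inv_conj_diagonal (W : Matrix n n ℝ) {d : n → ℝ} (hd : ∀ i, d i ≠ 0) :
    (W * diagonal d * star W)⁻¹ = (star W)⁻¹ * diagonal d⁻¹ * W⁻¹ := by
  have hdiag : (diagonal d)⁻¹ = diagonal d⁻¹ := inv_eq_left_inv <| by
    rw [diagonal_mul_diagonal, ← diagonal_one']
    exact congrArg diagonal (funext fun i => inv_mul_cancel₀ (hd i))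
  rw [Matrix.mul_inv_rev, Matrix.mul_inv_rev, hdiag, Matrix.mul_assoc]

theorem trace_pow_inv_mul_conj_diagonal {W : Matrix n n ℝ} (hW : IsUnit W) {d : n → ℝ}
    (hd : ∀ i, d i ≠ 0) (x : n → ℝ) (k : ℕ) :
    trace (((W * diagonal d * star W)⁻¹ * (W * diagonal x * star W)) ^ k) =
      ∑ i, (x i / d i) ^ k := by
  have hWinv : W⁻¹ * W = 1 := nonsing_inv_mul _ ((isUnit_iff_isUnit_det _).1 hW)
  have hsimilar : (W * diagonal d * star W)⁻¹ * (W * diagonal x * star W) =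
      (star W)⁻¹ * diagonal (x / d) * star W := by
    rw [inv_conj_diagonal W hd]
    simp only [Matrix.mul_assoc, ← Matrix.mul_assoc W⁻¹ W, hWinv, Matrix.one_mul]
    rw [← Matrix.mul_assoc (diagonal _), diagonal_mul_diagonal, div_eq_inv_mul]
    rfl
  set u := hW.star.unit
  rw [hsimilar, show (star W)⁻¹ = ((u⁻¹ : (Matrix n n ℝ)ˣ) : Matrix n n ℝ) by
      rw [coe_units_inv]; rfl, show star W = (u : Matrix n n ℝ) from rfl, Units.conj_pow',
    trace_mul_cycle, Units.mul_inv, Matrix.one_mul, diagonal_pow, trace_diagonal]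
  rfl

theorem trace_sq_conj_unitary {U : Matrix n n ℝ} (hU : star U * U = 1) (Y : Matrix n n ℝ) :
    trace ((U * Y * star U) ^ 2) = trace (Y ^ 2) := by
  rw [sq, sq, show U * Y * star U * (U * Y * star U) = U * (Y * Y) * star U by
    simp only [Matrix.mul_assoc, ← Matrix.mul_assoc (star U) U, hU, Matrix.one_mul],
    trace_mul_cycle, hU, Matrix.one_mul]

theorem IsHermitian.trace_sq_inv_mul_mem_Icc {A Δ : Matrix n n ℝ} (hA : A.IsHermitian)
    (hΔ : Δ.IsHermitian) {b B : ℝ} (hb : 0 < b) (hbA : ∀ i, b ≤ hA.eigenvalues i)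
    (hAB : ∀ i, hA.eigenvalues i ≤ B) :
    trace ((A⁻¹ * Δ) ^ 2) ∈ Set.Icc (trace (Δ ^ 2) / B ^ 2) (trace (Δ ^ 2) / b ^ 2) := by
  -- with `A = U diag(λ) Uᵀ` and `X = Uᵀ Δ U`, the two traces are `∑ Xᵢⱼ² / (λᵢ λⱼ)` and `∑ Xᵢⱼ²`
  set U := (hA.eigenvectorUnitary : Matrix n n ℝ)
  set lam := hA.eigenvalues
  have hUU : U * star U = 1 := Unitary.mul_star_self_of_mem hA.eigenvectorUnitary.2
  have hUU' : star U * U = 1 := Unitary.star_mul_self_of_mem hA.eigenvectorUnitary.2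
  have hlam : ∀ i, 0 < lam i := fun i => hb.trans_le (hbA i)
  set X := star U * Δ * U
  have hX : X.IsHermitian := isHermitian_conjTranspose_mul_mul U hΔ
  have hΔ_eq : Δ = U * X * star U := by
    simp only [X, ← Matrix.mul_assoc, hUU, Matrix.one_mul]
    simp only [Matrix.mul_assoc, hUU, Matrix.mul_one]
  have hAinvΔ : A⁻¹ * Δ = U * (diagonal lam⁻¹ * X) * star U := by
    rw [show A = U * diagonal lam * star U by simpa using hA.spectral_theorem,
      inv_conj_diagonal U fun i => (hlam i).ne', inv_eq_left_inv hUU, inv_eq_left_inv hUU', hΔ_eq]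
    simp only [Matrix.mul_assoc, ← Matrix.mul_assoc (star U) U, hUU', Matrix.one_mul]
  have hw : ∀ i j, (B ^ 2)⁻¹ ≤ lam⁻¹ i * lam⁻¹ j ∧ lam⁻¹ i * lam⁻¹ j ≤ (b ^ 2)⁻¹ := fun i j => by
    simp only [Pi.inv_apply, ← mul_inv, sq]
    exact ⟨inv_anti₀ (mul_pos (hlam i) (hlam j))
        (mul_le_mul (hAB i) (hAB j) (hlam j).le ((hlam i).le.trans (hAB i))),
      inv_anti₀ (mul_pos hb hb) (mul_le_mul (hbA i) (hbA j) hb.le (hlam i).le)⟩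
  have hsymm : ∀ i j, X j i = X i j := fun i j => by simpa using hX.apply i j
  rw [hAinvΔ, trace_sq_conj_unitary hUU', trace_sq_diagonal_mul, hΔ_eq,
    trace_sq_conj_unitary hUU', trace_sq_eq_sum_sq hX]
  simp only [hsymm, div_eq_mul_inv, Finset.sum_mul]
  exact ⟨Finset.sum_le_sum fun i _ => Finset.sum_le_sum fun j _ => by
      nlinarith [hw i j, mul_self_nonneg (X i j)],
    Finset.sum_le_sum fun i _ => Finset.sum_le_sum fun j _ => by
      nlinarith [hw i j, mul_self_nonneg (X i j)]⟩

theorem trace_sq_inv_mul_mem_Icc {A Δ : Matrix n n ℝ} (hΔ : Δ.IsHermitian) {b B : ℝ}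
    (hb : 0 < b) (hA : A ∈ Set.Icc (algebraMap ℝ _ b) (algebraMap ℝ _ B)) :
    trace ((A⁻¹ * Δ) ^ 2) ∈ Set.Icc (trace (Δ ^ 2) / B ^ 2) (trace (Δ ^ 2) / b ^ 2) :=
  have hAh := (posDef_of_algebraMap_le hb hA.1).1
  hAh.trace_sq_inv_mul_mem_Icc hΔ hb (hAh.algebraMap_le_iff_le_eigenvalues.1 hA.1)
    (hAh.le_algebraMap_iff_eigenvalues_le.1 hA.2)

theorem exists_conj_diagonal_of_posDef {θ Δ : Matrix n n ℝ} (hθ : θ.PosDef) (hΔ : Δ.IsHermitian) :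
    ∃ (W : Matrix n n ℝ) (x : n → ℝ), IsUnit W ∧ θ = W * star W ∧
      Δ = W * diagonal x * star W := by
  -- `W = θ^(1/2) U`, where `U` diagonalizes `θ^(-1/2) Δ θ^(-1/2)`
  set R := CFC.sqrt θ
  have hRR : R * R = θ := CFC.sqrt_mul_sqrt_self θ hθ.posSemidef.nonneg
  have hRs : star R = R := (CFC.sqrt_nonneg θ).isSelfAdjoint.star_eq
  have hR : IsUnit R := (CFC.isUnit_sqrt_iff θ hθ.posSemidef.nonneg).2 hθ.isUnit
  have hM : (R⁻¹ * Δ * R⁻¹).IsHermitian := by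
    have := isHermitian_conjTranspose_mul_mul R⁻¹ hΔ
    rwa [conjTranspose_nonsing_inv, ← star_eq_conjTranspose, hRs] at this
  obtain ⟨U, x, hUU, hspec⟩ : ∃ (U : Matrix n n ℝ) (x : n → ℝ), U * star U = 1 ∧
      R⁻¹ * Δ * R⁻¹ = U * diagonal x * star U :=
    ⟨_, _, Unitary.mul_star_self_of_mem hM.eigenvectorUnitary.2, by simpa using hM.spectral_theorem⟩
  have hRinv : R * R⁻¹ = 1 := mul_nonsing_inv _ ((isUnit_iff_isUnit_det _).1 hR)
  have hRinv' : R⁻¹ * R = 1 := nonsing_inv_mul _ ((isUnit_iff_isUnit_det _).1 hR)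
  refine ⟨R * U, x, hR.mul (IsUnit.of_mul_eq_one _ hUU), ?_, ?_⟩
  · rw [star_mul, Matrix.mul_assoc, ← Matrix.mul_assoc U, hUU, Matrix.one_mul, hRs, hRR]
  · calc Δ = R * (R⁻¹ * Δ * R⁻¹) * R := by
          simp only [Matrix.mul_assoc, hRinv', ← Matrix.mul_assoc R, hRinv, Matrix.one_mul,
            Matrix.mul_one]
      _ = R * U * diagonal x * star (R * U) := by
          rw [hspec, star_mul, hRs]; simp only [Matrix.mul_assoc]

theorem add_smul_conj_diagonal (W : Matrix n n ℝ) (x : n → ℝ) (t : ℝ) :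
    W * star W + t • (W * diagonal x * star W) = W * diagonal (fun i => 1 + t * x i) * star W := by
  rw [show diagonal (fun i => 1 + t * x i) = 1 + t • diagonal x by
      rw [← diagonal_one', ← diagonal_smul, diagonal_add]; rfl,
    Matrix.mul_add, Matrix.add_mul, Matrix.mul_one, Matrix.mul_smul, Matrix.smul_mul]

end Matrix

section LogDet

variable {n : Type*} [Fintype n] [DecidableEq n]

def logDetBregman (θ ϑ : Matrix n n ℝ) : ℝ :=
  Real.log θ.det - Real.log ϑ.det + trace (θ⁻¹ * (ϑ - θ))

theorem logDetBregman_eq_sum_sub_log {θ ϑ W : Matrix n n ℝ} {x : n → ℝ} (hW : IsUnit W)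
    (hx : ∀ i, 0 < 1 + x i) (hθ : θ = W * star W) (hϑθ : ϑ - θ = W * diagonal x * star W) :
    logDetBregman θ ϑ = ∑ i, (x i - Real.log (1 + x i)) := by
  have hθpd : θ.PosDef := by
    simpa [hθ] using hW.posDef_star_right_conjugate_iff.2 (PosDef.one (n := n) (R := ℝ))
  have hϑ : ϑ = W * diagonal (fun i => 1 + x i) * star W := by
    rw [← sub_add_cancel ϑ θ, hϑθ, hθ, add_comm]
    simpa using add_smul_conj_diagonal W x 1
  have hdet : ϑ.det = θ.det * ∏ i, (1 + x i) := by
    rw [hϑ, det_conj_diagonal, ← hθ]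
  have htr : trace (θ⁻¹ * (ϑ - θ)) = ∑ i, x i := by
    have h := trace_pow_inv_mul_conj_diagonal hW (fun _ => one_ne_zero) x 1
    rw [diagonal_one, Matrix.mul_one, ← hθ, ← hϑθ, pow_one] at h
    simpa using h
  rw [logDetBregman, hdet, Real.log_mul hθpd.det_pos.ne' (Finset.prod_pos fun i _ => hx i).ne',
    Real.log_prod fun i _ => (hx i).ne', htr, Finset.sum_sub_distrib]
  ring

theorem logDetBregman_mem_Icc {θ ϑ : Matrix n n ℝ} {b B : ℝ} (hb : 0 < b)
    (hθ : θ ∈ Set.Icc (algebraMap ℝ _ b) (algebraMap ℝ _ B))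
    (hϑ : ϑ ∈ Set.Icc (algebraMap ℝ _ b) (algebraMap ℝ _ B)) :
    logDetBregman θ ϑ ∈
      Set.Icc (trace ((ϑ - θ) ^ 2) / (2 * B ^ 2)) (trace ((ϑ - θ) ^ 2) / (2 * b ^ 2)) := by
  have hθpd := posDef_of_algebraMap_le hb hθ.1
  have hϑpd := posDef_of_algebraMap_le hb hϑ.1
  have hΔ : (ϑ - θ).IsHermitian := hϑpd.1.sub hθpd.1
  obtain ⟨W, x, hW, hθW, hΔW⟩ := exists_conj_diagonal_of_posDef hθpd hΔ
  have hpath : ∀ t : ℝ, θ + t • (ϑ - θ) = W * diagonal (fun i => 1 + t * x i) * star W :=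
    fun t => by rw [hΔW, hθW, add_smul_conj_diagonal]
  have hx : ∀ i, 0 < 1 + x i := by
    have hϑW : ϑ = W * diagonal (fun i => 1 + x i) * star W := by simpa using hpath 1
    exact posDef_diagonal_iff.1 (hW.posDef_star_right_conjugate_iff.1 (hϑW ▸ hϑpd))
  have htrace : ∀ t ∈ Set.Icc (0 : ℝ) 1, ∑ i, (x i / (1 + t * x i)) ^ 2 ∈
      Set.Icc (trace ((ϑ - θ) ^ 2) / B ^ 2) (trace ((ϑ - θ) ^ 2) / b ^ 2) := fun t ht => by
    rw [← trace_pow_inv_mul_conj_diagonal hW (fun i => (one_add_mul_pos (hx i) ht).ne') x 2,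
      ← hpath, ← hΔW]
    exact trace_sq_inv_mul_mem_Icc hΔ hb ((convex_Icc _ _).add_smul_sub_mem hθ hϑ ht)
  rw [logDetBregman_eq_sum_sub_log hW hx hθW hΔW]
  convert sum_sub_log_mem_Icc hx htrace using 2 <;> ring

end LogDet

theorem Mpp.mem_Icc {p : ℕ} {a A : ℝ} {M : Matrix (Fin p) (Fin p) ℝ} (h : Mpp a A M) :
    M ∈ Set.Icc (algebraMap ℝ _ a) (algebraMap ℝ _ A) := by
  obtain ⟨hM, ha, hA⟩ := h
  have hfin := Set.finite_range hM.1.eigenvalues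
  rw [lamMin, setOf_hasEigenvalue_toLin'_eq_range hM.1] at ha
  rw [lamMax, setOf_hasEigenvalue_toLin'_eq_range hM.1] at hA
  exact ⟨hM.1.algebraMap_le_iff_le_eigenvalues.2 fun i =>
      ha.trans (csInf_le hfin.bddBelow ⟨i, rfl⟩),
    hM.1.le_algebraMap_iff_eigenvalues_le.2 fun i => (le_csSup hfin.bddAbove ⟨i, rfl⟩).trans hA⟩

theorem frob_sq_eq_trace_sq {p : ℕ} {M : Matrix (Fin p) (Fin p) ℝ} (hM : M.IsHermitian) :
    frob M ^ 2 = trace (M ^ 2) := by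
  rw [frob, Real.sq_sqrt (by positivity), trace_sq_eq_sum_sq hM]

theorem gdet_eq_add_trace_add_logDetBregman {p : ℕ} (S θ ϑ : Matrix (Fin p) (Fin p) ℝ) :
    gdet S ϑ = gdet S θ + trace ((S - θ⁻¹) * (ϑ - θ)) + logDetBregman θ ϑ := by
  simp only [gdet, logDetBregman, Matrix.sub_mul, Matrix.mul_sub, trace_sub, trace_mul_comm S]
  ring

theorem logdet_two_sided_quadratic_bounds_general
    (p : ℕ) (S : Matrix (Fin p) (Fin p) ℝ)
    (b B : ℝ) (hb : 0 < b)
    (θ ϑ : Matrix (Fin p) (Fin p) ℝ) (hθ : Mpp b B θ) (hϑ : Mpp b B ϑ) :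
    gdet S θ + ((S - θ⁻¹) * (ϑ - θ)).trace + 1/(2*B^2) * (frob (ϑ - θ))^2 ≤ gdet S ϑ ∧
    gdet S ϑ ≤ gdet S θ + ((S - θ⁻¹) * (ϑ - θ)).trace + 1/(2*b^2) * (frob (ϑ - θ))^2 := by
  obtain ⟨hlower, hupper⟩ := logDetBregman_mem_Icc hb hθ.mem_Icc hϑ.mem_Icc
  rw [gdet_eq_add_trace_add_logDetBregman S θ ϑ, frob_sq_eq_trace_sq (hϑ.1.1.sub hθ.1.1),
    one_div_mul_eq_div, one_div_mul_eq_div]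
  exact ⟨by linarith, by linarith⟩

/-- Lemma 2 part 1, first half: two-sided quadratic bounds for
`g(θ) = -log det θ + Tr(θS)` on `M_p⁺(b,B)`, with gradient `∇g(θ) = S - θ⁻¹` and
trace inner product. -/
theorem logdet_two_sided_quadratic_bounds
    (p : ℕ) (S : Matrix (Fin p) (Fin p) ℝ) (hS : S.IsSymm)
    (b B : ℝ) (hb : 0 < b) (hbB : b < B)
    (θ ϑ : Matrix (Fin p) (Fin p) ℝ) (hθ : Mpp b B θ) (hϑ : Mpp b B ϑ) :
    gdet S θ + ((S - θ⁻¹) * (ϑ - θ)).trace + 1/(2*B^2) * (frob (ϑ - θ))^2 ≤ gdet S ϑ ∧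
    gdet S ϑ ≤ gdet S θ + ((S - θ⁻¹) * (ϑ - θ)).trace + 1/(2*b^2) * (frob (ϑ - θ))^2 :=
  logdet_two_sided_quadratic_bounds_general p S b B hb θ ϑ hθ hϑ

end
end

section
/- Let S be a real symmetric p×p matrix and define g(θ) = −log det θ + Tr(θS) on positive definite θ, with ∇g(θ) = S − θ⁻¹. Then for all positive definite symmetric θ, ϑ: g(ϑ) − g(θ) − ⟨∇g(θ), ϑ−θ⟩ ≥ ‖ϑ−θ‖_F² / (4‖θ‖₂(‖θ‖₂ + ½‖ϑ−θ‖_F)), where ‖θ‖₂ is the spectral norm. -/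
open Matrix Finset MeasureTheory ProbabilityTheory Filter

noncomputable section

/-
Write `θ = R * R` with `R = θ^{1/2}` and `M = R⁻¹ ϑ R⁻¹`, with eigenvalues `μᵢ > 0`. The left-hand
side of the claim is the Bregman divergence of `-log det`, which equals
`tr M - p - log det M = ∑ (μᵢ - 1 - log μᵢ)`, and each term is at least
`(μᵢ - 1)² / (2 (2 + |μᵢ - 1|)) ≥ (μᵢ - 1)² / (2 (2 + ‖M - 1‖_F))`. Summing gives
`φ(‖M - 1‖_F)` with `φ(x) = x² / (2 (2 + x))`, which is increasing. Finally `ϑ - θ = R (M - 1) R`,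
so `‖ϑ - θ‖_F ≤ ‖θ‖₂ ‖M - 1‖_F`, and `φ(‖ϑ - θ‖_F / ‖θ‖₂)` is the claimed bound.
-/

section Scalar
open Real

lemma sq_sub_one_div_le_sub_one_sub_log {x : ℝ} (hx : 0 < x) :
    (x - 1) ^ 2 / (2 * (2 + |x - 1|)) ≤ x - 1 - log x := by
  set s := √x
  have hs : 0 < s := sqrt_pos.mpr hx
  have hsx : s ^ 2 = x := sq_sqrt hx.le
  -- `log s ≤ s - 1` at `s = √x`
  have hsq : (s - 1) ^ 2 ≤ x - 1 - log x := by
    have := log_le_sub_one_of_pos hs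
    rw [← hsx, log_pow]; push_cast; nlinarith
  have hs1 : (s + 1) ^ 2 ≤ 2 * (2 + |s ^ 2 - 1|) := by
    rcases le_total 1 s with h | h
    · rw [abs_of_nonneg (by nlinarith)]; nlinarith
    · rw [abs_of_nonpos (by nlinarith)]; nlinarith
  refine le_trans ?_ hsq
  rw [div_le_iff₀ (by positivity), ← hsx]
  calc (s ^ 2 - 1) ^ 2 = (s - 1) ^ 2 * (s + 1) ^ 2 := by ring
    _ ≤ (s - 1) ^ 2 * (2 * (2 + |s ^ 2 - 1|)) := by gcongr

lemma sq_div_le_sum_sub_one_sub_log {n : Type*} [Fintype n] {μ : n → ℝ} (hμ : ∀ i, 0 < μ i) :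
    √(∑ i, (μ i - 1) ^ 2) ^ 2 / (2 * (2 + √(∑ i, (μ i - 1) ^ 2))) ≤
      ∑ i, (μ i - 1 - log (μ i)) := by
  rw [sq_sqrt (by positivity), Finset.sum_div]
  refine Finset.sum_le_sum fun i _ => le_trans ?_ (sq_sub_one_div_le_sub_one_sub_log (hμ i))
  have : |μ i - 1| ≤ √(∑ i, (μ i - 1) ^ 2) := abs_le_sqrt (Finset.single_le_sum
    (f := fun j => (μ j - 1) ^ 2) (fun j _ => sq_nonneg _) (Finset.mem_univ i))
  gcongr

-- At `a = 0` the left-hand side is `0` by the convention `x / 0 = 0`.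
lemma sq_div_le_sq_div_of_le_mul {a b d : ℝ} (ha : 0 ≤ a) (hb : 0 ≤ b) (hd : 0 ≤ d)
    (hbd : b ≤ a * d) :
    b ^ 2 / (4 * a * (a + 1 / 2 * b)) ≤ d ^ 2 / (2 * (2 + d)) := by
  rcases ha.eq_or_lt with rfl | ha
  · simp only [mul_zero, zero_mul, div_zero]; positivity
  rw [div_le_div_iff₀ (by positivity) (by positivity)]
  nlinarith [mul_le_mul_of_nonneg_right hbd (mul_nonneg hb hd),
    mul_le_mul hbd hbd hb (by positivity)]

end Scalar

section SpectralNorm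
variable {p : ℕ}

lemma vnorm_eq_norm (v : Fin p → ℝ) : vnorm v = ‖WithLp.toLp 2 v‖ := by
  simp [vnorm, EuclideanSpace.norm_eq]

lemma specNorm_nonneg (M : Matrix (Fin p) (Fin p) ℝ) : 0 ≤ specNorm M :=
  Real.sSup_nonneg fun _ ⟨_, _, hr⟩ => hr ▸ Real.sqrt_nonneg _

lemma vnorm_mulVec_le (M : Matrix (Fin p) (Fin p) ℝ) (v : Fin p → ℝ) :
    vnorm (M *ᵥ v) ≤ specNorm M * vnorm v := by
  have hbdd : BddAbove {r : ℝ | ∃ v : Fin p → ℝ, vnorm v = 1 ∧ r = vnorm (M *ᵥ v)} := by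
    refine ⟨‖Matrix.toEuclideanCLM (𝕜 := ℝ) M‖, fun _ ⟨u, hu, hr⟩ => ?_⟩
    rw [vnorm_eq_norm] at hu
    simpa [hr, vnorm_eq_norm, hu] using
      (Matrix.toEuclideanCLM (𝕜 := ℝ) M).le_opNorm (WithLp.toLp 2 u)
  rcases eq_or_ne v 0 with rfl | hv
  · simp [vnorm]
  have hv0 : 0 < vnorm v := by
    rw [vnorm_eq_norm]; exact norm_pos_iff.mpr (by simpa using hv)
  have hunit : vnorm ((vnorm v)⁻¹ • v) = 1 := by
    rw [vnorm_eq_norm, WithLp.toLp_smul, norm_smul, ← vnorm_eq_norm, norm_inv,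
      Real.norm_of_nonneg hv0.le, inv_mul_cancel₀ hv0.ne']
  have : vnorm (M *ᵥ ((vnorm v)⁻¹ • v)) ≤ specNorm M := le_csSup hbdd ⟨_, hunit, rfl⟩
  rw [Matrix.mulVec_smul, vnorm_eq_norm, WithLp.toLp_smul, norm_smul, ← vnorm_eq_norm,
    norm_inv, Real.norm_of_nonneg hv0.le, inv_mul_le_iff₀ hv0] at this
  linarith

lemma dotProduct_mulVec_le_specNorm_mul (M : Matrix (Fin p) (Fin p) ℝ) (x : Fin p → ℝ) :
    x ⬝ᵥ M *ᵥ x ≤ specNorm M * (x ⬝ᵥ x) := by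
  have hcs : ∀ y : Fin p → ℝ, x ⬝ᵥ y ≤ vnorm x * vnorm y := fun y => by
    simpa [vnorm_eq_norm, EuclideanSpace.inner_eq_star_dotProduct, dotProduct_comm] using
      real_inner_le_norm (WithLp.toLp 2 x) (WithLp.toLp 2 y)
  have hxx : x ⬝ᵥ x = vnorm x ^ 2 := by
    rw [vnorm, Real.sq_sqrt (by positivity)]; simp [dotProduct, sq]
  calc x ⬝ᵥ M *ᵥ x ≤ vnorm x * vnorm (M *ᵥ x) := hcs _
    _ ≤ vnorm x * (specNorm M * vnorm x) :=
      mul_le_mul_of_nonneg_left (vnorm_mulVec_le M x) (Real.sqrt_nonneg _)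
    _ = specNorm M * (x ⬝ᵥ x) := by rw [hxx]; ring

lemma posSemidef_specNorm_smul_one_sub {M : Matrix (Fin p) (Fin p) ℝ} (hM : M.IsHermitian) :
    (specNorm M • 1 - M).PosSemidef := by
  refine .of_dotProduct_mulVec_nonneg ((isHermitian_one.smul (.all _)).sub hM) fun x => ?_
  have := dotProduct_mulVec_le_specNorm_mul M x
  simp only [star_trivial, sub_mulVec, smul_mulVec, one_mulVec, dotProduct_sub, dotProduct_smul,
    smul_eq_mul]
  linarith

end SpectralNorm

section Trace
variable {n : Type*} [Fintype n]

open scoped MatrixOrder in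
lemma Matrix.PosSemidef.trace_mul_nonneg {A B : Matrix n n ℝ} (hA : A.PosSemidef)
    (hB : B.PosSemidef) : 0 ≤ (A * B).trace := by
  classical
  obtain ⟨C, rfl⟩ := CStarAlgebra.nonneg_iff_eq_star_mul_self.mp hB.nonneg
  rw [← Matrix.mul_assoc, trace_mul_comm, ← Matrix.mul_assoc]
  exact (hA.mul_mul_conjTranspose_same C).trace_nonneg

lemma trace_mul_le_mul_trace [DecidableEq n] {A B : Matrix n n ℝ} {a : ℝ}
    (hA : (a • 1 - A).PosSemidef) (hB : B.PosSemidef) : (A * B).trace ≤ a * B.trace := by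
  have := hA.trace_mul_nonneg hB
  rw [Matrix.sub_mul, trace_sub, smul_mul_assoc, Matrix.one_mul, trace_smul, smul_eq_mul] at this
  linarith

lemma trace_conj_mul_self_le [DecidableEq n] {R N : Matrix n n ℝ} {a : ℝ} (ha : 0 ≤ a)
    (hR : R.IsHermitian) (hN : N.IsHermitian) (hRa : (a • 1 - R * R).PosSemidef) :
    ((R * N * R) * (R * N * R)).trace ≤ a ^ 2 * (N * N).trace := by
  have hNRRN : (N * (R * R) * N).PosSemidef := by
    have := (posSemidef_conjTranspose_mul_self R).conjTranspose_mul_mul_same N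
    rwa [hN.eq, hR.eq] at this
  have hNN : (N * N).PosSemidef := by
    simpa only [hN.eq] using posSemidef_conjTranspose_mul_self N
  calc ((R * N * R) * (R * N * R)).trace = ((R * R) * (N * (R * R) * N)).trace := by
        rw [← trace_mul_cycle]; simp only [Matrix.mul_assoc]
    _ ≤ a * (N * (R * R) * N).trace := trace_mul_le_mul_trace hRa hNRRN
    _ = a * ((R * R) * (N * N)).trace := by
        rw [← trace_mul_cycle]; simp only [Matrix.mul_assoc]
    _ ≤ a * (a * (N * N).trace) := by gcongr; exact trace_mul_le_mul_trace hRa hNN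
    _ = a ^ 2 * (N * N).trace := by ring

end Trace

namespace Matrix.IsHermitian
variable {n : Type*} [Fintype n] [DecidableEq n] {A : Matrix n n ℝ} (hA : A.IsHermitian)
include hA

lemma trace_mul_self_eq_sum_sq : (A * A).trace = ∑ i, hA.eigenvalues i ^ 2 := by
  conv_lhs => rw [hA.spectral_theorem, ← map_mul, Unitary.conjStarAlgAut_apply, trace_mul_cycle,
    Unitary.coe_star_mul_self, Matrix.one_mul, diagonal_mul_diagonal, trace_diagonal]
  simp [sq]

lemma trace_sub_one_mul_sub_one :
    ((A - 1) * (A - 1)).trace = ∑ i, (hA.eigenvalues i - 1) ^ 2 := by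
  have h : (A - 1) * (A - 1) = A * A - 2 • A + 1 := by noncomm_ring
  simp only [h, trace_add, trace_sub, trace_smul, trace_one, hA.trace_mul_self_eq_sum_sq,
    hA.trace_eq_sum_eigenvalues, sub_sq, Finset.sum_add_distrib, Finset.sum_sub_distrib]
  simp [Finset.mul_sum]

end Matrix.IsHermitian

open Real in
lemma Matrix.PosDef.trace_sub_card_sub_log_det {n : Type*} [Fintype n] [DecidableEq n]
    {M : Matrix n n ℝ} (hM : M.PosDef) :
    M.trace - Fintype.card n - log M.det =
      ∑ i, (hM.1.eigenvalues i - 1 - log (hM.1.eigenvalues i)) := by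
  rw [hM.1.trace_eq_sum_eigenvalues, hM.1.det_eq_prod_eigenvalues]
  simp only [RCLike.ofReal_real_eq_id, id_eq]
  rw [log_prod fun i _ => (hM.eigenvalues_pos i).ne', Finset.sum_sub_distrib,
    Finset.sum_sub_distrib]
  simp

section Frobenius
variable {p : ℕ}

lemma frob_nonneg (A : Matrix (Fin p) (Fin p) ℝ) : 0 ≤ frob A := Real.sqrt_nonneg _

lemma frob_sq_eq_trace_mul_self {A : Matrix (Fin p) (Fin p) ℝ} (hA : A.IsHermitian) :
    frob A ^ 2 = (A * A).trace := by
  rw [frob, Real.sq_sqrt (by positivity)]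
  refine Finset.sum_congr rfl fun i _ => Finset.sum_congr rfl fun j _ => ?_
  have hji : A j i = A i j := by simpa using hA.apply i j
  simp [sq, hji]

lemma Matrix.IsHermitian.frob_sub_one {A : Matrix (Fin p) (Fin p) ℝ} (hA : A.IsHermitian) :
    frob (A - 1) = √(∑ i, (hA.eigenvalues i - 1) ^ 2) := by
  rw [← hA.trace_sub_one_mul_sub_one, ← frob_sq_eq_trace_mul_self (hA.sub isHermitian_one),
    Real.sqrt_sq (frob_nonneg _)]

lemma frob_mul_mul_le {R N : Matrix (Fin p) (Fin p) ℝ} (hR : R.IsHermitian)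
    (hN : N.IsHermitian) : frob (R * N * R) ≤ specNorm (R * R) * frob N := by
  have hRNR : (R * N * R).IsHermitian := by
    simpa only [hR.eq] using isHermitian_conjTranspose_mul_mul R hN
  rw [← pow_le_pow_iff_left₀ (frob_nonneg _)
    (mul_nonneg (specNorm_nonneg _) (frob_nonneg _)) two_ne_zero,
    mul_pow, frob_sq_eq_trace_mul_self hRNR, frob_sq_eq_trace_mul_self hN]
  have hRR : (R * R).IsHermitian := by
    simpa only [hR.eq] using isHermitian_conjTranspose_mul_self R
  exact trace_conj_mul_self_le (specNorm_nonneg _) hR hN (posSemidef_specNorm_smul_one_sub hRR)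

end Frobenius

open scoped MatrixOrder in
lemma Matrix.PosDef.exists_posDef_mul_self_eq {n : Type*} [Fintype n] [DecidableEq n]
    {A : Matrix n n ℝ} (hA : A.PosDef) : ∃ R : Matrix n n ℝ, R.PosDef ∧ R * R = A :=
  ⟨CFC.sqrt A, (hA.isStrictlyPositive.sqrt).posDef,
    CFC.sqrt_mul_sqrt_self A hA.posSemidef.nonneg⟩

open Real in
lemma gdet_sub_sub_trace_eq {p : ℕ} (S θ ϑ : Matrix (Fin p) (Fin p) ℝ) (hθ : θ.det ≠ 0)
    (hϑ : ϑ.det ≠ 0) :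
    gdet S ϑ - gdet S θ - ((S - θ⁻¹) * (ϑ - θ)).trace =
      (θ⁻¹ * ϑ).trace - p - log (θ⁻¹ * ϑ).det := by
  have hθθ : θ⁻¹ * θ = 1 := nonsing_inv_mul θ hθ.isUnit
  rw [det_mul, det_nonsing_inv, Ring.inverse_eq_inv', log_mul (inv_ne_zero hθ) hϑ, log_inv]
  simp only [gdet, sub_mul, mul_sub, trace_sub, hθθ, trace_one, Fintype.card_fin,
    trace_mul_comm S]
  ring

theorem logdet_strong_convexity_lower_bound_general
    (p : ℕ) (S : Matrix (Fin p) (Fin p) ℝ)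
    (θ ϑ : Matrix (Fin p) (Fin p) ℝ) (hθ : θ.PosDef) (hϑ : ϑ.PosDef) :
    (frob (ϑ - θ))^2 /
        (4 * specNorm θ * (specNorm θ + (1/2) * frob (ϑ - θ))) ≤
      gdet S ϑ - gdet S θ - ((S - θ⁻¹) * (ϑ - θ)).trace := by
  rw [gdet_sub_sub_trace_eq S θ ϑ hθ.det_pos.ne' hϑ.det_pos.ne']
  obtain ⟨R, hR, rfl⟩ := hθ.exists_posDef_mul_self_eq
  set M := R⁻¹ * ϑ * R⁻¹
  have hM : M.PosDef := by
    simpa only [hR.1.inv.eq] using hϑ.conjTranspose_mul_mul_same (B := R⁻¹)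
      (mulVec_injective_of_isUnit (isUnit_nonsing_inv_iff.mpr hR.isUnit))
  have hRdet : IsUnit R.det := (isUnit_iff_isUnit_det R).mp hR.isUnit
  have hΔ : ϑ - R * R = R * (M - 1) * R := by
    have : R * (M - 1) * R = (R * R⁻¹) * ϑ * (R⁻¹ * R) - R * R := by
      simp only [M]; noncomm_ring
    rw [this, mul_nonsing_inv R hRdet, nonsing_inv_mul R hRdet, Matrix.one_mul, Matrix.mul_one]
  have hsimilar : (R * R)⁻¹ * ϑ = R⁻¹ * (R⁻¹ * ϑ) := by
    rw [Matrix.mul_inv_rev, Matrix.mul_assoc]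
  calc _ ≤ frob (M - 1) ^ 2 / (2 * (2 + frob (M - 1))) := by
        refine sq_div_le_sq_div_of_le_mul (specNorm_nonneg _) (frob_nonneg _) (frob_nonneg _) ?_
        rw [hΔ]
        exact frob_mul_mul_le hR.1 (hM.1.sub isHermitian_one)
    _ ≤ ∑ i, (hM.1.eigenvalues i - 1 - Real.log (hM.1.eigenvalues i)) := by
        rw [hM.1.frob_sub_one]
        exact sq_div_le_sum_sub_one_sub_log hM.eigenvalues_pos
    _ = M.trace - p - Real.log M.det := by rw [← hM.trace_sub_card_sub_log_det, Fintype.card_fin]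
    _ = _ := by rw [hsimilar, trace_mul_comm R⁻¹, det_mul_comm R⁻¹]

/-- Lemma 2 part 1, second half: strong-convexity-type lower bound for
`g(θ) = -log det θ + Tr(θS)` on all of `M_p⁺`, in terms of the spectral norm of `θ`. -/
theorem logdet_strong_convexity_lower_bound
    (p : ℕ) (S : Matrix (Fin p) (Fin p) ℝ) (hS : S.IsSymm)
    (θ ϑ : Matrix (Fin p) (Fin p) ℝ) (hθ : θ.PosDef) (hϑ : ϑ.PosDef) :
    (frob (ϑ - θ))^2 /
        (4 * specNorm θ * (specNorm θ + (1/2) * frob (ϑ - θ))) ≤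
      gdet S ϑ - gdet S θ - ((S - θ⁻¹) * (ϑ - θ)).trace :=
  logdet_strong_convexity_lower_bound_general p S θ ϑ hθ hϑ
end
end

section
/- Taylor expansion identity for log-det: let θ₀, θ₁ be real symmetric positive definite p×p matrices and H = θ₁ − θ₀ (so θ₀ + tH is positive definite for all t ∈ [0,1]). Then −log det θ₁ + log det θ₀ + Tr(θ₀⁻¹ H) = ∫₀¹ Tr(θ₀⁻¹ H (θ₀ + tH)⁻¹ H) · t dt. -/
open Matrix Finset MeasureTheory ProbabilityTheory Filter

noncomputable section

/-! Along the segment `θ(t) = θ₀ + t H`, which stays positive definite, Jacobi's formula gives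
`d/dt log det θ(t) = Tr(θ(t)⁻¹ H)`, and the resolvent identity
`θ₀⁻¹ - θ(t)⁻¹ = t θ₀⁻¹ H θ(t)⁻¹` turns the derivative of `-log det θ(t) + t Tr(θ₀⁻¹ H)` into the
integrand. The identity is then the fundamental theorem of calculus on `[0, 1]`. -/

namespace Matrix

section Field

variable {n 𝕜 : Type*} [Fintype n] [DecidableEq n] [NontriviallyNormedField 𝕜]

theorem hasDerivAt_det_one_add_smul (M : Matrix n n 𝕜) :
    HasDerivAt (fun s : 𝕜 => (1 + s • M).det) M.trace 0 := by
  set q := (det (1 + (Polynomial.X : Polynomial 𝕜) • M.map Polynomial.C)).divX.divX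
  have hpoly : HasDerivAt (fun s => 1 + M.trace * s + q.eval s * s ^ 2) M.trace 0 := by
    simpa using (((hasDerivAt_id (0 : 𝕜)).const_mul M.trace).const_add 1).fun_add
      ((q.hasDerivAt 0).fun_mul (hasDerivAt_pow 2 (0 : 𝕜)))
  exact hpoly.congr_of_eventuallyEq (.of_forall fun s => det_one_add_smul s M)

theorem hasDerivAt_det_add_smul (A H : Matrix n n 𝕜) {t : 𝕜} (ht : IsUnit (A + t • H).det) :
    HasDerivAt (fun s : 𝕜 => (A + s • H).det)
      ((A + t • H).det * ((A + t • H)⁻¹ * H).trace) t := by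
  set B := A + t • H
  have hfactor : ∀ s : 𝕜, A + s • H = B * (1 + (s - t) • (B⁻¹ * H)) := fun s => by
    rw [Matrix.mul_add, Matrix.mul_one, Matrix.mul_smul, ← Matrix.mul_assoc,
      mul_nonsing_inv B ht, Matrix.one_mul]
    module
  have hB : HasDerivAt (fun s : 𝕜 => B.det * (1 + s • (B⁻¹ * H)).det)
      (B.det * (B⁻¹ * H).trace) (t - t) := by
    rw [sub_self]
    exact (hasDerivAt_det_one_add_smul _).const_mul B.det
  simpa only [hfactor, det_mul] using hB.comp_sub_const t t

theorem continuousOn_inv_add_smul (A H : Matrix n n 𝕜) {s : Set 𝕜}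
    (hs : ∀ t ∈ s, (A + t • H).det ≠ 0) : ContinuousOn (fun t : 𝕜 => (A + t • H)⁻¹) s := by
  intro t ht
  have hinv : ContinuousAt Ring.inverse (A + t • H).det := by
    rw [Ring.inverse_eq_inv']
    exact continuousAt_inv₀ (hs t ht)
  have hline : Continuous fun t : 𝕜 => A + t • H := by fun_prop
  exact ((continuousAt_matrix_inv _ hinv).comp (f := fun t : 𝕜 => A + t • H)
    hline.continuousAt).continuousWithinAt

theorem trace_inv_mul_sub_trace_inv_add_smul_mul {A H : Matrix n n 𝕜} {t : 𝕜}
    (hA : IsUnit A.det) (ht : IsUnit (A + t • H).det) :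
    (A⁻¹ * H).trace - ((A + t • H)⁻¹ * H).trace = (A⁻¹ * H * (A + t • H)⁻¹ * H).trace * t := by
  have hunits : IsUnit A ↔ IsUnit (A + t • H) :=
    ⟨fun _ => (isUnit_iff_isUnit_det _).mpr ht, fun _ => (isUnit_iff_isUnit_det _).mpr hA⟩
  rw [← trace_sub, ← Matrix.sub_mul, inv_sub_inv hunits, add_sub_cancel_left, Matrix.mul_smul,
    Matrix.smul_mul, Matrix.smul_mul, trace_smul, smul_eq_mul, mul_comm]

end Field

theorem PosDef.add_smul_sub {n : Type*} {A B : Matrix n n ℝ} (hA : A.PosDef) (hB : B.PosDef)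
    {t : ℝ} (ht : t ∈ Set.Icc (0 : ℝ) 1) : (A + t • (B - A)).PosDef := by
  have hcomb : A + t • (B - A) = (1 - t) • A + t • B := by module
  rcases ht.2.lt_or_eq with ht1 | rfl
  · rw [hcomb]
    exact (hA.smul (sub_pos.mpr ht1)).add_posSemidef (hB.posSemidef.smul ht.1)
  · simpa using hB

variable {n : Type*} [Fintype n] [DecidableEq n]

theorem hasDerivAt_log_det_add_smul (A H : Matrix n n ℝ) {t : ℝ} (ht : (A + t • H).det ≠ 0) :
    HasDerivAt (fun s : ℝ => Real.log (A + s • H).det) ((A + t • H)⁻¹ * H).trace t := by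
  simpa only [mul_div_cancel_left₀ _ ht] using
    (hasDerivAt_det_add_smul A H ht.isUnit).log ht

theorem hasDerivAt_neg_log_det_add_smul_add_mul_trace {A : Matrix n n ℝ} (H : Matrix n n ℝ)
    {t : ℝ} (hA : IsUnit A.det) (ht : (A + t • H).det ≠ 0) :
    HasDerivAt (fun s : ℝ => -Real.log (A + s • H).det + s * (A⁻¹ * H).trace)
      ((A⁻¹ * H * (A + t • H)⁻¹ * H).trace * t) t := by
  rw [← trace_inv_mul_sub_trace_inv_add_smul_mul hA ht.isUnit, sub_eq_neg_add]
  exact (hasDerivAt_log_det_add_smul A H ht).neg.add (hasDerivAt_mul_const _)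

end Matrix

/-- Taylor expansion identity for `log det` at `θ₀`, with `H = θ₁ - θ₀`:
`-log det θ₁ + log det θ₀ + Tr(θ₀⁻¹H) = ∫₀¹ Tr(θ₀⁻¹ H (θ₀ + tH)⁻¹ H) t dt`. -/
theorem logdet_taylor_remainder_integral
    (p : ℕ) (θ0 θ1 : Matrix (Fin p) (Fin p) ℝ) (h0 : θ0.PosDef) (h1 : θ1.PosDef) :
    -Real.log θ1.det + Real.log θ0.det + (θ0⁻¹ * (θ1 - θ0)).trace =
      ∫ t in (0:ℝ)..1,
        (θ0⁻¹ * (θ1 - θ0) * (θ0 + t • (θ1 - θ0))⁻¹ * (θ1 - θ0)).trace * t := by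
  set H := θ1 - θ0 with hH
  have hdet : ∀ t ∈ Set.uIcc (0 : ℝ) 1, (θ0 + t • H).det ≠ 0 := fun t ht =>
    (h0.add_smul_sub h1 (by rwa [Set.uIcc_of_le zero_le_one] at ht)).det_pos.ne'
  have hcont := continuousOn_inv_add_smul θ0 H hdet
  have hint : IntervalIntegrable (fun t => (θ0⁻¹ * H * (θ0 + t • H)⁻¹ * H).trace * t)
      volume 0 1 := ContinuousOn.intervalIntegrable (by fun_prop)
  rw [intervalIntegral.integral_eq_sub_of_hasDerivAt (fun t ht =>
    hasDerivAt_neg_log_det_add_smul_add_mul_trace H h0.det_pos.ne'.isUnit (hdet t ht)) hint]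
  simp only [hH, one_smul, zero_smul, add_zero, add_sub_cancel, one_mul, zero_mul]
  ring

end
end

section
/- Eigenvalue shift bound for the elastic-net proximal map of a symmetric matrix: fix α ∈ [0,1) and γ > 0, and let M be a real symmetric p×p matrix. Then λ_min(Prox_γ(M)) ≥ (λ_min(M) − αγp)/(1 + (1−α)γ) and λ_max(Prox_γ(M)) ≤ (λ_max(M) + αγp)/(1 + (1−α)γ). -/
open Matrix Finset MeasureTheory ProbabilityTheory Filter

noncomputable section

/-! Put `c = 1 + (1 - α)γ` and `N = Prox_γ(M)`. Every entry of `cN - M` has absolute value at most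
`αγ`, so `|vᵀ(cN - M)v| ≤ αγ (∑ᵢ |vᵢ|)² ≤ αγ p ‖v‖²`. For an eigenvector `v` of `N` with eigenvalue
`r` this reads `|c r ‖v‖² - vᵀMv| ≤ αγ p ‖v‖²`, and the Rayleigh bounds
`λ_min(M) ‖v‖² ≤ vᵀMv ≤ λ_max(M) ‖v‖²` (obtained from positive semidefiniteness of `M - λ_min(M)`
and `λ_max(M) - M`) locate `r`. -/

namespace Matrix

variable {n : Type*} [Fintype n]

theorem setOf_hasEigenvalue_toLin' [DecidableEq n] {K : Type*} [Field K] (A : Matrix n n K) :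
    {r : K | Module.End.HasEigenvalue (toLin' A) r} = spectrum K A :=
  Set.ext fun _ => Module.End.hasEigenvalue_iff_mem_spectrum.trans (by rw [spectrum_toLin'])

theorem IsHermitian.mul_dotProduct_self_le_dotProduct_mulVec [DecidableEq n] {A : Matrix n n ℝ}
    (hA : A.IsHermitian) {a : ℝ} (ha : ∀ r ∈ spectrum ℝ A, a ≤ r) (v : n → ℝ) :
    a * (v ⬝ᵥ v) ≤ v ⬝ᵥ A *ᵥ v := by
  have hpsd : (A - algebraMap ℝ _ a).PosSemidef := by
    refine posSemidef_iff_isHermitian_and_spectrum_nonneg.mpr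
      ⟨hA.sub (by rw [algebraMap_eq_diagonal]; exact isHermitian_diagonal _), ?_⟩
    rw [← spectrum.sub_singleton_eq]
    rintro _ ⟨r, hr, _, rfl, rfl⟩
    exact sub_nonneg.mpr (ha r hr)
  have := hpsd.dotProduct_mulVec_nonneg v
  simpa [Algebra.algebraMap_eq_smul_one, sub_mulVec, smul_mulVec, dotProduct_smul] using this

theorem IsHermitian.dotProduct_mulVec_le_mul_dotProduct_self [DecidableEq n] {A : Matrix n n ℝ}
    (hA : A.IsHermitian) {b : ℝ} (hb : ∀ r ∈ spectrum ℝ A, r ≤ b) (v : n → ℝ) :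
    v ⬝ᵥ A *ᵥ v ≤ b * (v ⬝ᵥ v) := by
  have hpsd : (algebraMap ℝ _ b - A).PosSemidef := by
    refine posSemidef_iff_isHermitian_and_spectrum_nonneg.mpr
      ⟨IsHermitian.sub (by rw [algebraMap_eq_diagonal]; exact isHermitian_diagonal _) hA, ?_⟩
    rw [← spectrum.singleton_sub_eq]
    rintro _ ⟨_, rfl, r, hr, rfl⟩
    exact sub_nonneg.mpr (hb r hr)
  have := hpsd.dotProduct_mulVec_nonneg v
  simpa [Algebra.algebraMap_eq_smul_one, sub_mulVec, smul_mulVec, dotProduct_smul] using this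

theorem abs_dotProduct_mulVec_le_of_abs_le {E : Matrix n n ℝ} {ε : ℝ} (hε : 0 ≤ ε)
    (hE : ∀ i j, |E i j| ≤ ε) (v : n → ℝ) :
    |v ⬝ᵥ E *ᵥ v| ≤ ε * Fintype.card n * (v ⬝ᵥ v) := by
  calc |v ⬝ᵥ E *ᵥ v| = |∑ i, ∑ j, v i * E i j * v j| := by
        simp only [dotProduct, mulVec, Finset.mul_sum, mul_assoc]
    _ ≤ ∑ i, ∑ j, |v i| * ε * |v j| := by
        refine (Finset.abs_sum_le_sum_abs _ _).trans (Finset.sum_le_sum fun i _ => ?_)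
        refine (Finset.abs_sum_le_sum_abs _ _).trans (Finset.sum_le_sum fun j _ => ?_)
        rw [abs_mul, abs_mul]
        gcongr
        exact hE i j
    _ = ε * (∑ i, |v i|) ^ 2 := by
        simp only [sq, Finset.sum_mul, Finset.mul_sum]
        exact Finset.sum_congr rfl fun i _ => Finset.sum_congr rfl fun j _ => by ring
    _ ≤ ε * (Fintype.card n * ∑ i, |v i| ^ 2) := by
        gcongr
        exact sq_sum_le_card_mul_sum_sq
    _ = ε * Fintype.card n * (v ⬝ᵥ v) := by
        simp_rw [sq_abs, dotProduct, sq, mul_assoc]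

end Matrix

open Matrix

theorem lamMin_eq_sInf_spectrum {p : ℕ} (A : Matrix (Fin p) (Fin p) ℝ) :
    lamMin A = sInf (spectrum ℝ A) := by
  rw [lamMin, setOf_hasEigenvalue_toLin']

theorem lamMax_eq_sSup_spectrum {p : ℕ} (A : Matrix (Fin p) (Fin p) ℝ) :
    lamMax A = sSup (spectrum ℝ A) := by
  rw [lamMax, setOf_hasEigenvalue_toLin']

theorem lamMin_mul_dotProduct_self_le {p : ℕ} {A : Matrix (Fin p) (Fin p) ℝ} (hA : A.IsSymm)
    (v : Fin p → ℝ) : lamMin A * (v ⬝ᵥ v) ≤ v ⬝ᵥ A *ᵥ v :=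
  (isHermitian_iff_isSymm.mpr hA).mul_dotProduct_self_le_dotProduct_mulVec
    (fun _ hr => lamMin_eq_sInf_spectrum A ▸ csInf_le finite_real_spectrum.bddBelow hr) v

theorem dotProduct_mulVec_le_lamMax_mul {p : ℕ} {A : Matrix (Fin p) (Fin p) ℝ} (hA : A.IsSymm)
    (v : Fin p → ℝ) : v ⬝ᵥ A *ᵥ v ≤ lamMax A * (v ⬝ᵥ v) :=
  (isHermitian_iff_isSymm.mpr hA).dotProduct_mulVec_le_mul_dotProduct_self
    (fun _ hr => lamMax_eq_sSup_spectrum A ▸ le_csSup finite_real_spectrum.bddAbove hr) v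

theorem eigenvalue_mem_Icc_of_abs_mul_sub_le {p : ℕ} {A B : Matrix (Fin p) (Fin p) ℝ}
    (hA : A.IsSymm) {c ε r : ℝ} (hc : 0 < c) (hε : 0 ≤ ε) (hAB : ∀ i j, |c * B i j - A i j| ≤ ε)
    (hr : Module.End.HasEigenvalue (toLin' B) r) :
    r ∈ Set.Icc ((lamMin A - ε * p) / c) ((lamMax A + ε * p) / c) := by
  obtain ⟨v, hv⟩ := hr.exists_hasEigenvector
  have hBv : B *ᵥ v = r • v := by simpa [toLin'_apply] using hv.apply_eq_smul
  have hvv : 0 < v ⬝ᵥ v := by simpa using dotProduct_star_self_pos_iff.mpr hv.2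
  have hquad : v ⬝ᵥ (c • B - A) *ᵥ v = c * r * (v ⬝ᵥ v) - v ⬝ᵥ A *ᵥ v := by
    rw [sub_mulVec, smul_mulVec, hBv, dotProduct_sub, dotProduct_smul, dotProduct_smul]
    simp only [smul_eq_mul]; ring
  have hpert := abs_dotProduct_mulVec_le_of_abs_le hε (E := c • B - A) hAB v
  rw [hquad, Fintype.card_fin, abs_le] at hpert
  have hmin := lamMin_mul_dotProduct_self_le hA v
  have hmax := dotProduct_mulVec_le_lamMax_mul hA v
  constructor
  · rw [div_le_iff₀ hc]
    exact le_of_mul_le_mul_right (by nlinarith) hvv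
  · rw [le_div_iff₀ hc]
    exact le_of_mul_le_mul_right (by nlinarith) hvv

theorem proxMat_isSymm {p : ℕ} (α γ : ℝ) {M : Matrix (Fin p) (Fin p) ℝ} (hM : M.IsSymm) :
    (proxMat α γ M).IsSymm :=
  IsSymm.ext fun i j => by simp only [proxMat, of_apply, hM.apply i j]

theorem abs_mul_proxMat_sub_le {p : ℕ} {α γ : ℝ} (hαγ : 0 ≤ α * γ) (hc : 1 + (1 - α) * γ ≠ 0)
    (M : Matrix (Fin p) (Fin p) ℝ) (i j : Fin p) :
    |(1 + (1 - α) * γ) * proxMat α γ M i j - M i j| ≤ α * γ := by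
  simp only [proxMat, of_apply]
  split_ifs with hsmall
  · simpa using hsmall.le
  · rw [mul_div_cancel₀ _ hc, sub_sub_cancel_left, abs_neg, abs_of_nonneg hαγ]
  · rw [mul_div_cancel₀ _ hc, add_sub_cancel_left, abs_of_nonneg hαγ]

/-- eigenvalue shift bounds for the elastic-net proximal map of a
symmetric matrix. -/
theorem prox_eigenvalue_shift_bounds
    (p : ℕ) (α γ : ℝ) (hα0 : 0 ≤ α) (hα1 : α < 1) (hγ : 0 < γ)
    (M : Matrix (Fin p) (Fin p) ℝ) (hM : M.IsSymm) :
    (lamMin M - α*γ*(p : ℝ))/(1+(1-α)*γ) ≤ lamMin (proxMat α γ M) ∧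
    lamMax (proxMat α γ M) ≤ (lamMax M + α*γ*(p : ℝ))/(1+(1-α)*γ) := by
  rcases Nat.eq_zero_or_pos p with rfl | hp
  -- with no eigenvalues at all, every `lamMin` and `lamMax` is the junk value `0`
  · simp [lamMin_eq_sInf_spectrum, lamMax_eq_sSup_spectrum, spectrum.of_subsingleton]
  have hαγ : 0 ≤ α * γ := mul_nonneg hα0 hγ.le
  have hc : 0 < 1 + (1 - α) * γ := by nlinarith
  have hbounds {r : ℝ} (hr : Module.End.HasEigenvalue (toLin' (proxMat α γ M)) r) :=
    eigenvalue_mem_Icc_of_abs_mul_sub_le hM hc hαγ (abs_mul_proxMat_sub_le hαγ hc.ne' M) hr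
  have hne : {r | Module.End.HasEigenvalue (toLin' (proxMat α γ M)) r}.Nonempty :=
    setOf_hasEigenvalue_toLin' (proxMat α γ M) ▸ ⟨_, (isHermitian_iff_isSymm.mpr
      (proxMat_isSymm α γ hM)).eigenvalues_mem_spectrum_real ⟨0, hp⟩⟩
  exact ⟨le_csInf hne fun _ hr => (hbounds hr).1, csSup_le hne fun _ hr => (hbounds hr).2⟩

end
end
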